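/- arXiv:1610.07160 — 2 statements merged into one kernel-verified Lean document; each statement's English description precedes it below -/
import Mathlib

section
/- In any finite-stage two-player game with alternating moves (of any length N, with any action sets and any real-valued payoff functions), either (i) player 1 has a winning strategy, or (ii) player 2 has a winning strategy, or (iii) player 1 has an unbeatable strategy and player 2 has an unbeatable strategy. -/
/-- A strategy of player 1 in a finite-stage two-player game with alternating
moves of length `N`: for each stage `t ≤ N`, a map from the pair of partial
histories `(a_0,…,a_{t-1})` and `(b_0,…,b_{t-1})` to an action in `A`. -/
def Strat1 (A B : Type*) (N : ℕ) : Type _ :=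
  ∀ t : Fin (N + 1), (Fin t → A) → (Fin t → B) → A

/-- A strategy of player 2: for each stage `t ≤ N`, a map from the pair of
partial histories `(a_0,…,a_t)` and `(b_0,…,b_{t-1})` to an action in `B`. -/
def Strat2 (A B : Type*) (N : ℕ) : Type _ :=
  ∀ t : Fin (N + 1), (Fin (t + 1) → A) → (Fin t → B) → B

/-- The pair of partial histories of play of length `t` generated by the
strategy profile `(ξ, η)`:  `a_t = x_t(a^{t-1}, b^{t-1})`, `b_t = y_t(a^t, b^{t-1})`. -/
noncomputable def play {A B : Type*} [Nonempty A] [Nonempty B] {N : ℕ}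
    (ξ : Strat1 A B N) (η : Strat2 A B N) : (t : ℕ) → (Fin t → A) × (Fin t → B)
  | 0 => (Fin.elim0, Fin.elim0)
  | t + 1 =>
      let p := play ξ η t
      if h : t < N + 1 then
        let a : A := ξ ⟨t, h⟩ p.1 p.2
        let b : B := η ⟨t, h⟩ (Fin.snoc p.1 a) p.2
        (Fin.snoc p.1 a, Fin.snoc p.2 b)
      else (fun _ => Classical.arbitrary A, fun _ => Classical.arbitrary B)

/-- The outcome (whole history) `h(ξ,η) = (a_0,…,a_N, b_0,…,b_N)` of the game. -/
noncomputable def hist {A B : Type*} [Nonempty A] [Nonempty B] {N : ℕ}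
    (ξ : Strat1 A B N) (η : Strat2 A B N) :
    (Fin (N + 1) → A) × (Fin (N + 1) → B) :=
  play ξ η (N + 1)

/-- `ξ` is a winning strategy for player 1: `U(ξ,η) > V(ξ,η)` for every `η`. -/
def Winning1 {A B : Type*} [Nonempty A] [Nonempty B] {N : ℕ}
    (u v : (Fin (N + 1) → A) × (Fin (N + 1) → B) → ℝ) (ξ : Strat1 A B N) : Prop :=
  ∀ η : Strat2 A B N, v (hist ξ η) < u (hist ξ η)

/-- `ξ` is an unbeatable strategy for player 1: `U(ξ,η) ≥ V(ξ,η)` for every `η`. -/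
def Unbeatable1 {A B : Type*} [Nonempty A] [Nonempty B] {N : ℕ}
    (u v : (Fin (N + 1) → A) × (Fin (N + 1) → B) → ℝ) (ξ : Strat1 A B N) : Prop :=
  ∀ η : Strat2 A B N, v (hist ξ η) ≤ u (hist ξ η)

/-- `η` is a winning strategy for player 2: `V(ξ,η) > U(ξ,η)` for every `ξ`. -/
def Winning2 {A B : Type*} [Nonempty A] [Nonempty B] {N : ℕ}
    (u v : (Fin (N + 1) → A) × (Fin (N + 1) → B) → ℝ) (η : Strat2 A B N) : Prop :=
  ∀ ξ : Strat1 A B N, u (hist ξ η) < v (hist ξ η)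

/-- `η` is an unbeatable strategy for player 2: `V(ξ,η) ≥ U(ξ,η)` for every `ξ`. -/
def Unbeatable2 {A B : Type*} [Nonempty A] [Nonempty B] {N : ℕ}
    (u v : (Fin (N + 1) → A) × (Fin (N + 1) → B) → ℝ) (η : Strat2 A B N) : Prop :=
  ∀ ξ : Strat1 A B N, u (hist ξ η) ≤ v (hist ξ η)

/-- A strategy of player 1 is basic if each move depends only on the previous
moves of the rival. -/
def IsBasic1 {A B : Type*} {N : ℕ} (ξ : Strat1 A B N) : Prop :=
  ∀ (t : Fin (N + 1)) (as as' : Fin t → A) (bs : Fin t → B), ξ t as bs = ξ t as' bs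

/-- A strategy of player 2 is basic if each move depends only on the previous
moves of the rival. -/
def IsBasic2 {A B : Type*} {N : ℕ} (η : Strat2 A B N) : Prop :=
  ∀ (t : Fin (N + 1)) (as : Fin (t + 1) → A) (bs bs' : Fin t → B), η t as bs = η t as bs'

/-- The sequence of partial histories of player 1's moves generated by the
strategy `ξ` against the fixed move sequence `bs` of player 2. -/
noncomputable def play1 {A B : Type*} [Nonempty A] {N : ℕ}
    (ξ : Strat1 A B N) (bs : Fin (N + 1) → B) : (t : ℕ) → Fin t → A
  | 0 => Fin.elim0
  | t + 1 =>
      let p := play1 ξ bs t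
      if h : t < N + 1 then
        Fin.snoc p (ξ ⟨t, h⟩ p (fun i => bs ⟨i.val, lt_trans i.isLt h⟩))
      else fun _ => Classical.arbitrary A

/-- The sequence of partial histories of player 2's moves generated by the
strategy `η` against the fixed move sequence `as` of player 1. -/
noncomputable def play2 {A B : Type*} [Nonempty B] {N : ℕ}
    (η : Strat2 A B N) (as : Fin (N + 1) → A) : (t : ℕ) → Fin t → B
  | 0 => Fin.elim0
  | t + 1 =>
      let p := play2 η as t
      if h : t < N + 1 then
        Fin.snoc p (η ⟨t, h⟩
          (fun i => as ⟨i.val, Nat.lt_of_le_of_lt (Nat.le_of_lt_succ i.isLt) h⟩) p)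
      else fun _ => Classical.arbitrary B

/- Backward induction. Call a position winning for player 1 if he has a move such that, whatever
player 2 answers, the new position is again winning; at the end of the game, if the play satisfies
`P`. From a winning position player 1 can keep the play in winning positions, from any other one
player 2 can keep it out of them. Applying this dichotomy to `v < u` and to `v ≤ u` yields the
three cases. -/

open Function

/-- Padding by an arbitrary value, so that histories of all lengths live in `ℕ → X`. -/
noncomputable def extendSeq {X : Type*} [Nonempty X] {n : ℕ} (f : Fin n → X) : ℕ → X :=
  fun i => if h : i < n then f ⟨i, h⟩ else Classical.arbitrary X

lemma extendSeq_snoc {X : Type*} [Nonempty X] {n : ℕ} (f : Fin n → X) (x : X) :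
    extendSeq (Fin.snoc f x : Fin (n + 1) → X) = update (extendSeq f) n x := by
  funext i
  rcases lt_trichotomy i n with h | rfl | h
  · simp [extendSeq, h, Nat.lt_succ_of_lt h, update_of_ne h.ne, Fin.snoc, Fin.castLT]
  · simp [extendSeq, Fin.snoc]
  · simp [extendSeq, update_of_ne h.ne', h.not_gt, (Nat.succ_le_of_lt h).not_gt]

lemma extendSeq_apply_fin {X : Type*} [Nonempty X] {n : ℕ} (f : Fin n → X) :
    (fun i : Fin n => extendSeq f i) = f := by
  funext i
  simp [extendSeq]

/-- `CanForce Q t k f g`: at stage `t`, with `k` stages left and moves `f`, `g` so far,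
player 1 can force the play to satisfy `Q`. -/
def CanForce {A B : Type*} (Q : (ℕ → A) → (ℕ → B) → Prop) :
    ℕ → ℕ → (ℕ → A) → (ℕ → B) → Prop
  | _, 0, f, g => Q f g
  | t, k + 1, f, g => ∃ a, ∀ b, CanForce Q (t + 1) k (update f t a) (update g t b)

section
open scoped Classical
variable {A B : Type*} [Nonempty A] [Nonempty B] {N : ℕ}

noncomputable def forcingStrat1 (Q : (ℕ → A) → (ℕ → B) → Prop) : Strat1 A B N :=
  fun t as bs =>
    if h : ∃ a, ∀ b, CanForce Q (t + 1) (N - t) (update (extendSeq as) t a)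
        (update (extendSeq bs) t b)
    then h.choose else Classical.arbitrary A

noncomputable def spoilingStrat2 (Q : (ℕ → A) → (ℕ → B) → Prop) : Strat2 A B N :=
  fun t as bs =>
    if h : ∃ b, ¬ CanForce Q (t + 1) (N - t) (extendSeq as) (update (extendSeq bs) t b)
    then h.choose else Classical.arbitrary B

lemma play_succ (ξ : Strat1 A B N) (η : Strat2 A B N) {t : ℕ} (ht : t < N + 1) :
    play ξ η (t + 1) =
      (Fin.snoc (play ξ η t).1 (ξ ⟨t, ht⟩ (play ξ η t).1 (play ξ η t).2),
        Fin.snoc (play ξ η t).2 (η ⟨t, ht⟩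
          (Fin.snoc (play ξ η t).1 (ξ ⟨t, ht⟩ (play ξ η t).1 (play ξ η t).2)) (play ξ η t).2)) := by
  rw [play, dif_pos ht]

lemma canForce_play_forcingStrat1 (Q : (ℕ → A) → (ℕ → B) → Prop)
    (hQ : CanForce Q 0 (N + 1) (extendSeq (Fin.elim0 : Fin 0 → A))
      (extendSeq (Fin.elim0 : Fin 0 → B)))
    (η : Strat2 A B N) {t : ℕ} (ht : t ≤ N + 1) :
    CanForce Q t (N + 1 - t) (extendSeq (play (forcingStrat1 Q) η t).1)
      (extendSeq (play (forcingStrat1 Q) η t).2) := by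
  induction t with
  | zero => exact hQ
  | succ t ih =>
    have ht' : t < N + 1 := by omega
    set p := play (forcingStrat1 Q) η t
    have hmove : ∃ a, ∀ b, CanForce Q (t + 1) (N - t) (update (extendSeq p.1) t a)
        (update (extendSeq p.2) t b) := by
      have := ih ht'.le
      rwa [show N + 1 - t = N - t + 1 by omega, CanForce] at this
    have hchoice : forcingStrat1 (N := N) Q ⟨t, ht'⟩ p.1 p.2 = hmove.choose := dif_pos hmove
    rw [play_succ _ _ ht', extendSeq_snoc, extendSeq_snoc, hchoice, Nat.add_sub_add_right]
    exact hmove.choose_spec _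

lemma not_canForce_play_spoilingStrat2 (Q : (ℕ → A) → (ℕ → B) → Prop)
    (hQ : ¬ CanForce Q 0 (N + 1) (extendSeq (Fin.elim0 : Fin 0 → A))
      (extendSeq (Fin.elim0 : Fin 0 → B)))
    (ξ : Strat1 A B N) {t : ℕ} (ht : t ≤ N + 1) :
    ¬ CanForce Q t (N + 1 - t) (extendSeq (play ξ (spoilingStrat2 Q) t).1)
      (extendSeq (play ξ (spoilingStrat2 Q) t).2) := by
  induction t with
  | zero => exact hQ
  | succ t ih =>
    have ht' : t < N + 1 := by omega
    set p := play ξ (spoilingStrat2 Q) t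
    set a := ξ ⟨t, ht'⟩ p.1 p.2
    have hreply : ∃ b, ¬ CanForce Q (t + 1) (N - t) (extendSeq (Fin.snoc p.1 a : Fin (t + 1) → A))
        (update (extendSeq p.2) t b) := by
      have := ih ht'.le
      rw [show N + 1 - t = N - t + 1 by omega, CanForce, not_exists] at this
      simpa only [extendSeq_snoc, not_forall] using this a
    have hchoice : spoilingStrat2 (N := N) Q ⟨t, ht'⟩ (Fin.snoc p.1 a) p.2 = hreply.choose :=
      dif_pos hreply
    rw [play_succ _ _ ht', extendSeq_snoc p.2, hchoice, Nat.add_sub_add_right]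
    exact hreply.choose_spec

theorem exists_strat1_forall_or_exists_strat2_forall_not
    (P : (Fin (N + 1) → A) × (Fin (N + 1) → B) → Prop) :
    (∃ ξ : Strat1 A B N, ∀ η, P (hist ξ η)) ∨ (∃ η : Strat2 A B N, ∀ ξ, ¬ P (hist ξ η)) := by
  let Q : (ℕ → A) → (ℕ → B) → Prop := fun f g => P (fun i => f i, fun i => g i)
  have hQ (ξ : Strat1 A B N) (η : Strat2 A B N) :
      Q (extendSeq (hist ξ η).1) (extendSeq (hist ξ η).2) ↔ P (hist ξ η) := by
    simp only [Q, extendSeq_apply_fin]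
  by_cases h : CanForce Q 0 (N + 1) (extendSeq (Fin.elim0 : Fin 0 → A))
      (extendSeq (Fin.elim0 : Fin 0 → B))
  · refine Or.inl ⟨forcingStrat1 Q, fun η => (hQ _ _).mp ?_⟩
    have := canForce_play_forcingStrat1 Q h η le_rfl
    rwa [Nat.sub_self] at this
  · refine Or.inr ⟨spoilingStrat2 Q, fun ξ hP => ?_⟩
    have := not_canForce_play_spoilingStrat2 Q h ξ le_rfl
    rw [Nat.sub_self] at this
    exact this ((hQ _ _).mpr hP)

end

/-- **Zermelo's theorem, general form.** In any finite-stage two-player game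
with alternating moves, either player 1 has a winning strategy, or player 2
has a winning strategy, or both players have unbeatable strategies. -/
theorem zermelo_general {A B : Type*} [Nonempty A] [Nonempty B] {N : ℕ}
    (u v : (Fin (N + 1) → A) × (Fin (N + 1) → B) → ℝ) :
    (∃ ξ : Strat1 A B N, Winning1 u v ξ) ∨
    (∃ η : Strat2 A B N, Winning2 u v η) ∨
    ((∃ ξ : Strat1 A B N, Unbeatable1 u v ξ) ∧
      (∃ η : Strat2 A B N, Unbeatable2 u v η)) := by
  rcases exists_strat1_forall_or_exists_strat2_forall_not (fun h => v h < u h)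
    with hwin1 | ⟨η, hη⟩
  · exact Or.inl hwin1
  rcases exists_strat1_forall_or_exists_strat2_forall_not (fun h => ¬ u h < v h)
    with ⟨ξ, hξ⟩ | ⟨η', hη'⟩
  · exact Or.inr <| Or.inr ⟨⟨ξ, fun η => not_lt.mp (hξ η)⟩, ⟨η, fun ξ => not_lt.mp (hη ξ)⟩⟩
  · exact Or.inr <| Or.inl ⟨η', fun ξ => not_not.mp (hη' ξ)⟩
end

section
/- In any finite-stage two-player game with alternating moves, either player 2 has a basic winning strategy or player 1 has a basic unbeatable strategy. -/
/-!
Backward induction (Zermelo): for a set `W` of outcomes, call a position forced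
(`Player1Forces W`) if player 1 can guarantee that the outcome lies in `W`. Player 1 moves so
as to stay in forced positions and player 2 so as to stay out of them, so which of them wins
depends only on whether the initial position is forced; take `W = {v ≤ u}`. Any strategy can
be made basic without changing a single outcome, because a player's own past moves are
determined by the rival's past moves through the strategy itself.
-/

section

variable {A B : Type*} {N : ℕ}

namespace Strat1

variable [Nonempty A]

noncomputable def replay (ξ : Strat1 A B N) : (t : ℕ) → (Fin t → B) → Fin t → A
  | 0, _ => Fin.elim0
  | t + 1, bs =>
      let as := replay ξ t (Fin.init bs)
      Fin.snoc as (if h : t < N + 1 then ξ ⟨t, h⟩ as (Fin.init bs) else Classical.arbitrary A)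

noncomputable def toBasic (ξ : Strat1 A B N) : Strat1 A B N :=
  fun t _ bs => ξ t (ξ.replay t bs) bs

theorem isBasic_toBasic (ξ : Strat1 A B N) : IsBasic1 ξ.toBasic :=
  fun _ _ _ _ => rfl

variable [Nonempty B]

theorem play_fst_eq_replay (ξ : Strat1 A B N) (η : Strat2 A B N) :
    ∀ t ≤ N + 1, (play ξ η t).1 = ξ.replay t (play ξ η t).2
  | 0, _ => funext fun i => i.elim0
  | t + 1, ht => by
      have ih := play_fst_eq_replay ξ η t (by omega)
      simp only [play, dif_pos (show t < N + 1 by omega), replay, Fin.init_snoc, ← ih]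

theorem play_toBasic (ξ : Strat1 A B N) (η : Strat2 A B N) :
    ∀ t, play ξ.toBasic η t = play ξ η t
  | 0 => rfl
  | t + 1 => by
      by_cases ht : t < N + 1
      · simp only [play, dif_pos ht, toBasic, play_toBasic ξ η t,
          ← play_fst_eq_replay ξ η t ht.le]
      · simp only [play, dif_neg ht]

theorem hist_toBasic (ξ : Strat1 A B N) (η : Strat2 A B N) : hist ξ.toBasic η = hist ξ η :=
  play_toBasic ξ η (N + 1)

end Strat1

namespace Strat2

variable [Nonempty B]

noncomputable def replay (η : Strat2 A B N) : (t : ℕ) → (Fin t → A) → Fin t → B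
  | 0, _ => Fin.elim0
  | t + 1, as =>
      let bs := replay η t (Fin.init as)
      Fin.snoc bs (if h : t < N + 1 then η ⟨t, h⟩ as bs else Classical.arbitrary B)

noncomputable def toBasic (η : Strat2 A B N) : Strat2 A B N :=
  fun t as _ => η t as (η.replay t (Fin.init as))

theorem isBasic_toBasic (η : Strat2 A B N) : IsBasic2 η.toBasic :=
  fun _ _ _ _ => rfl

variable [Nonempty A]

theorem play_snd_eq_replay (ξ : Strat1 A B N) (η : Strat2 A B N) :
    ∀ t ≤ N + 1, (play ξ η t).2 = η.replay t (play ξ η t).1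
  | 0, _ => funext fun i => i.elim0
  | t + 1, ht => by
      have ih := play_snd_eq_replay ξ η t (by omega)
      simp only [play, dif_pos (show t < N + 1 by omega), replay, Fin.init_snoc, ← ih]

theorem play_toBasic (ξ : Strat1 A B N) (η : Strat2 A B N) :
    ∀ t, play ξ η.toBasic t = play ξ η t
  | 0 => rfl
  | t + 1 => by
      by_cases ht : t < N + 1
      · simp only [play, dif_pos ht, toBasic, play_toBasic ξ η t, Fin.init_snoc,
          ← play_snd_eq_replay ξ η t ht.le]
      · simp only [play, dif_neg ht]

theorem hist_toBasic (ξ : Strat1 A B N) (η : Strat2 A B N) : hist ξ η.toBasic = hist ξ η :=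
  play_toBasic ξ η (N + 1)

end Strat2

section Determinacy

variable (W : (Fin (N + 1) → A) × (Fin (N + 1) → B) → Prop)

def Player1Forces : (t : ℕ) → (Fin t → A) → (Fin t → B) → Prop := fun t as bs =>
  if h : t < N + 1 then ∃ a, ∀ b, Player1Forces (t + 1) (Fin.snoc as a) (Fin.snoc bs b)
  else W (fun i => as ⟨i, by omega⟩, fun i => bs ⟨i, by omega⟩)
termination_by t => N + 1 - t

variable {W}

theorem player1Forces_iff_of_lt {t : ℕ} (h : t < N + 1) (as : Fin t → A) (bs : Fin t → B) :
    Player1Forces W t as bs ↔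
      ∃ a, ∀ b, Player1Forces W (t + 1) (Fin.snoc as a) (Fin.snoc bs b) := by
  rw [Player1Forces, dif_pos h]

theorem player1Forces_last_iff (as : Fin (N + 1) → A) (bs : Fin (N + 1) → B) :
    Player1Forces W (N + 1) as bs ↔ W (as, bs) := by
  rw [Player1Forces, dif_neg (lt_irrefl _)]

variable (W) [Nonempty A] [Nonempty B]

noncomputable def Strat1.forcing : Strat1 A B N := fun t as bs =>
  Classical.epsilon fun a => ∀ b, Player1Forces W (t + 1) (Fin.snoc as a) (Fin.snoc bs b)

noncomputable def Strat2.refuting : Strat2 A B N := fun t as bs =>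
  Classical.epsilon fun b => ¬ Player1Forces W (t + 1) as (Fin.snoc bs b)

variable {W}

theorem player1Forces_play_forcing (h₀ : Player1Forces W 0 Fin.elim0 Fin.elim0)
    (η : Strat2 A B N) :
    ∀ t ≤ N + 1, Player1Forces W t (play (.forcing W) η t).1 (play (.forcing W) η t).2
  | 0, _ => h₀
  | t + 1, ht => by
      have ht' : t < N + 1 := by omega
      have ih := (player1Forces_iff_of_lt ht' _ _).1 (player1Forces_play_forcing h₀ η t ht'.le)
      simp only [play, dif_pos ht']
      exact Classical.epsilon_spec ih _

theorem not_player1Forces_play_refuting (h₀ : ¬ Player1Forces W 0 Fin.elim0 Fin.elim0)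
    (ξ : Strat1 A B N) :
    ∀ t ≤ N + 1, ¬ Player1Forces W t (play ξ (.refuting W) t).1 (play ξ (.refuting W) t).2
  | 0, _ => h₀
  | t + 1, ht => by
      have ht' : t < N + 1 := by omega
      have ih := not_player1Forces_play_refuting h₀ ξ t ht'.le
      rw [player1Forces_iff_of_lt ht'] at ih
      simp only [not_exists, not_forall] at ih
      simp only [play, dif_pos ht']
      exact Classical.epsilon_spec (ih _)

variable (W)

theorem exists_forall_hist_or_exists_forall_not_hist :
    (∃ ξ : Strat1 A B N, ∀ η, W (hist ξ η)) ∨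
      ∃ η : Strat2 A B N, ∀ ξ, ¬ W (hist ξ η) := by
  by_cases h₀ : Player1Forces W 0 Fin.elim0 Fin.elim0
  · exact .inl ⟨.forcing W, fun η =>
      (player1Forces_last_iff _ _).1 (player1Forces_play_forcing h₀ η (N + 1) le_rfl)⟩
  · exact .inr ⟨.refuting W, fun ξ =>
      mt (player1Forces_last_iff _ _).2 (not_player1Forces_play_refuting h₀ ξ (N + 1) le_rfl)⟩

end Determinacy

end

/-- In any finite-stage two-player game with alternating moves, either
player 2 has a basic winning strategy or player 1 has a basic unbeatable
strategy. -/
theorem win2_or_unbeatable1_basic {A B : Type*} [Nonempty A] [Nonempty B] {N : ℕ}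
    (u v : (Fin (N + 1) → A) × (Fin (N + 1) → B) → ℝ) :
    (∃ η : Strat2 A B N, IsBasic2 η ∧ Winning2 u v η) ∨
    (∃ ξ : Strat1 A B N, IsBasic1 ξ ∧ Unbeatable1 u v ξ) := by
  rcases exists_forall_hist_or_exists_forall_not_hist (fun h => v h ≤ u h) with
    ⟨ξ, hξ⟩ | ⟨η, hη⟩
  · exact .inr ⟨ξ.toBasic, ξ.isBasic_toBasic, fun η => by
      simpa only [Strat1.hist_toBasic] using hξ η⟩
  · exact .inl ⟨η.toBasic, η.isBasic_toBasic, fun ξ => by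
      simpa only [Strat2.hist_toBasic, not_le] using hη ξ⟩
end
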